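/- arXiv:0909.0136 — 3 statements merged into one kernel-verified Lean document; each statement's English description precedes it below -/
import Mathlib

section
/- Let $X$ be a Banach space, $T, U : X \to \mathbb{R}$ continuous with $T \geq 0$, $T(0) = U(0) = 0$, $F = T - U$, $i_\lambda = \inf\{T(u) : U(u) = \lambda\}$, $\lambda^{**} = \inf\{\lambda > 0 : i_\lambda - \lambda < 0\} > 0$, and assume $\lambda \mapsto i_\lambda - \lambda$ is continuous on $(0,\lambda^{**}]$ and attains its maximum on $(0, \lambda^{**})$ at some $\bar\lambda$. Then for every path $\eta \in C([0,1]; X)$ with $\eta(0)=0$ and $F(\eta(1)) < 0$, there exists $\bar t \in (0,1)$ with $U(\eta(\bar t)) = \bar\lambda$, where $i_{\bar\lambda} - \bar\lambda = \max_{\lambda \in (0,\lambda^{**})}(i_\lambda - \lambda)$. -/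
/-!
The level `λ̄` lies strictly between `U (η 0) = 0` and `U (η 1)`: the endpoint satisfies
`i (U (η 1)) ≤ T (η 1) < U (η 1)`, so `U (η 1)` is one of the levels defining `λ**`, whence
`λ̄ < λ** ≤ U (η 1)`. The intermediate value theorem for `U ∘ η` then gives the crossing time.
-/

open Set

theorem sInf_image_level_le {X : Type*} (T U : X → ℝ) (hT : ∀ u, 0 ≤ T u) (u : X) :
    sInf (T '' {v | U v = U u}) ≤ T u :=
  csInf_le ⟨0, by rintro _ ⟨v, -, rfl⟩; exact hT v⟩ ⟨u, rfl, rfl⟩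

theorem sInf_negativeLevels_le_of_lt {X : Type*} (T U : X → ℝ) (hT : ∀ u, 0 ≤ T u) {u : X}
    (hu : T u < U u) :
    sInf {l : ℝ | 0 < l ∧ sInf (T '' {v | U v = l}) - l < 0} ≤ U u := by
  have hmem : 0 < U u ∧ sInf (T '' {v | U v = U u}) - U u < 0 :=
    ⟨(hT u).trans_lt hu, by linarith [sInf_image_level_le T U hT u]⟩
  exact csInf_le ⟨0, fun _ hl => hl.1.le⟩ hmem

theorem path_crosses_maximal_level_general
    {X : Type*} [NormedAddCommGroup X]
    (T U : X → ℝ) (hU : Continuous U)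
    (hTnonneg : ∀ u, 0 ≤ T u) (hU0 : U 0 = 0)
    (F : X → ℝ) (hF : ∀ u, F u = T u - U u)
    (i : ℝ → ℝ) (hi : ∀ l : ℝ, i l = sInf (T '' {u | U u = l}))
    (lss : ℝ) (hlss : lss = sInf {l : ℝ | 0 < l ∧ i l - l < 0})
    (lbar : ℝ) (hlbar : lbar ∈ Ioo 0 lss) :
    ∀ η : ℝ → X, ContinuousOn η (Icc 0 1) → η 0 = 0 → F (η 1) < 0 →
      ∃ t ∈ Ioo (0:ℝ) 1, U (η t) = lbar := by
  intro η hη hη0 hFη1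
  have hlss_le : lss ≤ U (η 1) := by
    simp only [hlss, hi]
    exact sInf_negativeLevels_le_of_lt T U hTnonneg (by linarith [hF (η 1)])
  have hlbar_mem : lbar ∈ Ioo (U (η 0)) (U (η 1)) := by
    rw [hη0, hU0]
    exact ⟨hlbar.1, hlbar.2.trans_le hlss_le⟩
  exact intermediate_value_Ioo zero_le_one (hU.comp_continuousOn hη) hlbar_mem

/-- Every admissible mountain pass path must cross the level set `{U = λ̄}` where
`λ̄ ∈ (0, λ**)` maximizes `I λ = i λ - λ` over `(0, λ**)`. -/
theorem path_crosses_maximal_level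
    {X : Type*} [NormedAddCommGroup X] [NormedSpace ℝ X] [CompleteSpace X]
    (T U : X → ℝ) (hT : Continuous T) (hU : Continuous U)
    (hTnonneg : ∀ u, 0 ≤ T u) (hT0 : T 0 = 0) (hU0 : U 0 = 0)
    (F : X → ℝ) (hF : ∀ u, F u = T u - U u)
    (i : ℝ → ℝ) (hi : ∀ l : ℝ, i l = sInf (T '' {u | U u = l}))
    (lss : ℝ) (hlss : lss = sInf {l : ℝ | 0 < l ∧ i l - l < 0})
    (hlsspos : 0 < lss)
    (hIcont : ContinuousOn (fun l => i l - l) (Ioc 0 lss))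
    (lbar : ℝ) (hlbar : lbar ∈ Ioo 0 lss)
    (hmax : ∀ l ∈ Ioo 0 lss, i l - l ≤ i lbar - lbar) :
    ∀ η : ℝ → X, ContinuousOn η (Icc 0 1) → η 0 = 0 → F (η 1) < 0 →
      ∃ t ∈ Ioo (0:ℝ) 1, U (η t) = lbar :=
  path_crosses_maximal_level_general T U hU hTnonneg hU0 F hF i hi lss hlss lbar hlbar
end

section
/- Let $X$ be a Banach space, $T, U : X \to \mathbb{R}$ continuous, $T \geq 0$, $T(0)=U(0)=0$, $F = T - U$, and $i_\lambda = \inf\{T(u) : U(u) = \lambda\}$. Assume: (i) $i_\lambda \to 0$ as $\lambda \to 0^+$; (ii) $\lambda^* := \inf\{\lambda > 0 : i_\lambda - \lambda \leq 0\} > 0$; (iii) $\lambda^{**} := \inf\{\lambda > 0 : i_\lambda - \lambda < 0\} > 0$; (iv) for every $\lambda > 0$ the set $\mathcal{M}_\lambda = \{u : U(u) = \lambda,\ T(u) = i_\lambda\}$ is nonempty; (v) there is a continuous $\gamma : [0,\infty) \to X$ with $\gamma(\lambda) \in \mathcal{M}_\lambda$ for all $\lambda > 0$ and $\gamma(0)=0$.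 Let $c = \inf_{\eta \in \Gamma} \sup_{t \in [0,1]} F(\eta(t))$ where $\Gamma = \{\eta \in C([0,1];X): \eta(0)=0,\ F(\eta(1))<0\}$. Then $c > 0$ and $c = \sup_{\lambda \in (0,\lambda^{**})} \inf_{u \in \mathcal{U}_\lambda} F(u) = \sup_{\lambda \in (0,\lambda^{**})} F(\gamma(\lambda))$. -/
/-!
Along the path of minimizers, `F (γ λ) = i_λ - λ`, and `i_{U u} - U u ≤ F u` for every `u`.
A path `η ∈ Γ` ends where `i_{U} - U ≤ F < 0`, i.e. at a level `U (η 1) ≥ λ**`, so by the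
intermediate value theorem it crosses every level `λ ∈ (0, λ**)`, where `F ≥ i_λ - λ`: its maximum
is at least `S = sup_{(0, λ**)} F ∘ γ`. Conversely, pick `Λ` slightly above `λ**` with
`i_Λ < Λ`; the rescaled path `t ↦ γ (t Λ)` lies in `Γ`, and continuity of `F ∘ γ` at `λ**`
bounds its maximum by anything above `S`. Hence `c = S`, and `S > 0` since `i_λ > λ` below `λ*`.
-/

open Set Topology

theorem ContinuousOn.le_sSup_image_Ioo {g : ℝ → ℝ} {a b : ℝ} (hg : ContinuousOn g (Icc a b))
    (hab : a < b) {l : ℝ} (hl : l ∈ Icc a b) : g l ≤ sSup (g '' Ioo a b) := by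
  have hbdd : BddAbove (g '' Ioo a b) :=
    (isCompact_Icc.image_of_continuousOn hg).bddAbove.mono (image_mono Ioo_subset_Icc_self)
  rw [← closure_Ioo hab.ne] at hg hl
  have hcl : closure (g '' Ioo a b) ⊆ Iic (sSup (g '' Ioo a b)) :=
    isClosed_Iic.closure_subset_iff.mpr fun _ hy => le_csSup hbdd hy
  exact hcl (hg.image_closure (mem_image_of_mem g hl))

theorem ContinuousOn.exists_gt_forall_Ico_lt {g : ℝ → ℝ} {x₀ a w : ℝ}
    (hg : ContinuousOn g (Ici x₀)) (ha : x₀ < a) (hw : sSup (g '' Ioo x₀ a) < w) :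
    ∃ b, a < b ∧ ∀ l ∈ Ico x₀ b, g l < w := by
  have hle : ∀ l ∈ Icc x₀ a, g l < w := fun l hl =>
    ((hg.mono Icc_subset_Ici_self).le_sSup_image_Ioo ha hl).trans_lt hw
  have hnhds : {l | g l < w} ∈ 𝓝 a :=
    (hg.continuousAt (Ici_mem_nhds ha)).preimage_mem_nhds
      (Iio_mem_nhds (hle a ⟨ha.le, le_rfl⟩))
  obtain ⟨b, hab, hsub⟩ := exists_Ico_subset_of_mem_nhds hnhds ⟨a + 1, lt_add_one a⟩
  refine ⟨b, hab, fun l hl => ?_⟩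
  rcases le_or_gt l a with hla | hla
  · exact hle l ⟨hl.1, hla⟩
  · exact hsub ⟨hla.le, hl.2⟩

section MountainPass

variable {X : Type*} {T U F : X → ℝ} {i : ℝ → ℝ}

theorem sInf_image_level_sub_le (hT : ∀ u, 0 ≤ T u) (hF : ∀ u, F u = T u - U u) (u : X) :
    sInf (T '' {v | U v = U u}) - U u ≤ F u := by
  have hbdd : BddBelow (T '' {v | U v = U u}) := ⟨0, by rintro _ ⟨v, -, rfl⟩; exact hT v⟩
  rw [hF]
  linarith [csInf_le hbdd ⟨u, rfl, rfl⟩]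

theorem sInf_image_level_eq (hiF : ∀ u, i (U u) - U u ≤ F u) {v : X} {l : ℝ} (hv : U v = l)
    (hFv : F v = i l - l) : sInf (F '' {u | U u = l}) = F v :=
  IsLeast.csInf_eq ⟨⟨v, hv, rfl⟩, by rintro _ ⟨u, rfl, rfl⟩; exact hFv ▸ hiF u⟩

variable [TopologicalSpace X]

theorem sub_le_sSup_image_of_mem_Icc (hiF : ∀ u, i (U u) - U u ≤ F u) (hFc : Continuous F)
    (hU : Continuous U) {η : ℝ → X} {a b : ℝ} (hab : a ≤ b) (hη : ContinuousOn η (Icc a b))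
    {l : ℝ} (hl : l ∈ Icc (U (η a)) (U (η b))) :
    i l - l ≤ sSup ((fun t => F (η t)) '' Icc a b) := by
  obtain ⟨t, ht, htl⟩ := intermediate_value_Icc hab (hU.comp_continuousOn hη) hl
  have hbdd := (isCompact_Icc.image_of_continuousOn (hFc.comp_continuousOn hη)).bddAbove
  calc i l - l = i (U (η t)) - U (η t) := by rw [← htl]; rfl
    _ ≤ F (η t) := hiF (η t)
    _ ≤ _ := le_csSup hbdd ⟨t, ht, rfl⟩

variable [Zero X]

/-- The values `max_{[0,1]} F ∘ η` for `η ∈ Γ`; the mountain pass level `c` is their infimum. -/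
def mountainPassValues (F : X → ℝ) : Set ℝ :=
  {m | ∃ η : ℝ → X, ContinuousOn η (Icc 0 1) ∧ η 0 = 0 ∧ F (η 1) < 0 ∧
    m = sSup ((fun t => F (η t)) '' Icc 0 1)}

theorem sub_le_of_mem_mountainPassValues (hiF : ∀ u, i (U u) - U u ≤ F u)
    (hUpos : ∀ u, F u < 0 → 0 < U u) (hFc : Continuous F) (hU : Continuous U) (hU0 : U 0 = 0)
    {m : ℝ} (hm : m ∈ mountainPassValues F) {l : ℝ}
    (hl : l ∈ Ioo 0 (sInf {l | 0 < l ∧ i l - l < 0})) : i l - l ≤ m := by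
  obtain ⟨η, hη, hη0, hη1, rfl⟩ := hm
  have hend : sInf {l | 0 < l ∧ i l - l < 0} ≤ U (η 1) :=
    csInf_le ⟨0, fun _ h => h.1.le⟩ ⟨hUpos _ hη1, (hiF _).trans_lt hη1⟩
  refine sub_le_sSup_image_of_mem_Icc hiF hFc hU zero_le_one hη ?_
  rw [hη0, hU0]
  exact ⟨hl.1.le, hl.2.le.trans hend⟩

theorem sSup_image_Icc_mem_mountainPassValues {γ : ℝ → X} {Λ : ℝ}
    (hγ : ContinuousOn γ (Icc 0 Λ)) (hγ0 : γ 0 = 0) (hΛ : 0 ≤ Λ) (hΛneg : F (γ Λ) < 0) :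
    sSup ((fun l => F (γ l)) '' Icc 0 Λ) ∈ mountainPassValues F := by
  have hscale : (· * Λ) '' Icc (0 : ℝ) 1 = Icc 0 Λ := by
    rw [image_mul_right_Icc zero_le_one hΛ, zero_mul, one_mul]
  refine ⟨fun t => γ (t * Λ), ?_, by simp [hγ0], by simpa using hΛneg, ?_⟩
  · exact hγ.comp (continuous_mul_const Λ).continuousOn fun t ht => hscale ▸ mem_image_of_mem _ ht
  · rw [← hscale, image_image]

theorem exists_mem_mountainPassValues_lt {γ : ℝ → X} (hγ : ContinuousOn γ (Ici 0))
    (hγ0 : γ 0 = 0) (hFc : Continuous F) {A : Set ℝ} (hA : ∀ l ∈ A, 0 < l ∧ F (γ l) < 0)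
    (hApos : 0 < sInf A) {w : ℝ} (hw : sSup ((fun l => F (γ l)) '' Ioo 0 (sInf A)) < w) :
    ∃ m ∈ mountainPassValues F, m < w := by
  have hAne : A.Nonempty := by
    by_contra h
    rw [not_nonempty_iff_eq_empty.mp h, Real.sInf_empty] at hApos
    exact lt_irrefl 0 hApos
  have hg : ContinuousOn (fun l => F (γ l)) (Ici 0) := hFc.comp_continuousOn hγ
  obtain ⟨b, hAb, hb⟩ := hg.exists_gt_forall_Ico_lt hApos hw
  obtain ⟨Λ, hΛA, hΛb⟩ := exists_lt_of_csInf_lt hAne hAb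
  have hΛ := hA Λ hΛA
  refine ⟨_, sSup_image_Icc_mem_mountainPassValues (hγ.mono Icc_subset_Ici_self) hγ0 hΛ.1.le
    hΛ.2, ?_⟩
  rw [isCompact_Icc.sSup_lt_iff_of_continuous (nonempty_Icc.mpr hΛ.1.le)
    (hg.mono Icc_subset_Ici_self)]
  exact fun l hl => hb l ⟨hl.1, hl.2.trans_lt hΛb⟩

end MountainPass

theorem maxmin_mountain_pass_general
    {X : Type*} [NormedAddCommGroup X]
    (T U : X → ℝ) (hT : Continuous T) (hU : Continuous U)
    (hTnonneg : ∀ u, 0 ≤ T u) (hU0 : U 0 = 0)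
    (F : X → ℝ) (hF : ∀ u, F u = T u - U u)
    (i : ℝ → ℝ) (hi : ∀ l : ℝ, i l = sInf (T '' {u | U u = l}))
    -- (ii) λ* > 0
    (ls : ℝ) (hls : ls = sInf {l : ℝ | 0 < l ∧ i l - l ≤ 0}) (hlspos : 0 < ls)
    -- (iii) λ** > 0
    (lss : ℝ) (hlss : lss = sInf {l : ℝ | 0 < l ∧ i l - l < 0}) (hlsspos : 0 < lss)
    -- (v) continuous selection of minimizers
    (γ : ℝ → X) (hγcont : ContinuousOn γ (Ici 0)) (hγ0 : γ 0 = 0)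
    (hγ : ∀ l : ℝ, 0 < l → U (γ l) = l ∧ T (γ l) = i l)
    -- the mountain pass level
    (c : ℝ)
    (hc : c = sInf {m : ℝ | ∃ η : ℝ → X, ContinuousOn η (Icc 0 1) ∧ η 0 = 0 ∧
            F (η 1) < 0 ∧ m = sSup ((fun t => F (η t)) '' Icc 0 1)}) :
    0 < c ∧
      c = sSup ((fun l => sInf (F '' {u | U u = l})) '' Ioo 0 lss) ∧
      c = sSup ((fun l => F (γ l)) '' Ioo 0 lss) := by
  subst hls
  change c = sInf (mountainPassValues F) at hc
  have hFc : Continuous F := (funext hF : F = fun u => T u - U u) ▸ hT.sub hU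
  have hiF (u : X) : i (U u) - U u ≤ F u := hi (U u) ▸ sInf_image_level_sub_le hTnonneg hF u
  have hUpos (u : X) (hu : F u < 0) : 0 < U u := by linarith [hF u, hTnonneg u]
  have hγF (l : ℝ) (hl : 0 < l) : F (γ l) = i l - l := by rw [hF, (hγ l hl).1, (hγ l hl).2]
  set S := sSup ((fun l => F (γ l)) '' Ioo 0 lss)
  have hlower (m : ℝ) (hm : m ∈ mountainPassValues F) : S ≤ m :=
    csSup_le ((nonempty_Ioo.mpr hlsspos).image _) <| forall_mem_image.mpr fun l hl =>
      hγF l hl.1 ▸ sub_le_of_mem_mountainPassValues hiF hUpos hFc hU hU0 hm (hlss ▸ hl)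
  have hupper (w : ℝ) (hw : S < w) : ∃ m ∈ mountainPassValues F, m < w :=
    exists_mem_mountainPassValues_lt hγcont hγ0 hFc
      (fun l (hl : 0 < l ∧ i l - l < 0) => ⟨hl.1, hγF l hl.1 ▸ hl.2⟩) (hlss ▸ hlsspos) (hlss ▸ hw)
  have hcS : c = S := hc ▸ csInf_eq_of_forall_ge_of_forall_gt_exists_lt
    (let ⟨m, hm, _⟩ := hupper (S + 1) (lt_add_one S); ⟨m, hm⟩) hlower hupper
  obtain ⟨l₀, hl₀, hl₀min⟩ := exists_between (lt_min hlspos hlsspos)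
  have hSpos : 0 < S := calc
    0 < i l₀ - l₀ := by
      by_contra! h
      exact notMem_of_lt_csInf (hl₀min.trans_le (min_le_left _ _)) ⟨0, fun _ h => h.1.le⟩ ⟨hl₀, h⟩
    _ = F (γ l₀) := (hγF l₀ hl₀).symm
    _ ≤ S := ((hFc.comp_continuousOn hγcont).mono Icc_subset_Ici_self).le_sSup_image_Ioo
      hlsspos ⟨hl₀.le, (hl₀min.trans_le (min_le_right _ _)).le⟩
  refine ⟨hcS ▸ hSpos, hcS ▸ congrArg sSup (image_congr fun l hl => ?_), hcS⟩
  exact (sInf_image_level_eq hiF (hγ l hl.1).1 (hγF l hl.1)).symm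

/-- Max-min characterization of the mountain pass energy level: under the hypotheses of the
abstract theorem, `c > 0` and `c` equals the sup over `λ ∈ (0, λ**)` of the min of `F` on the
level set `{U = λ}`, which equals the sup of `F` along the continuous path of minimizers. -/
theorem maxmin_mountain_pass
    {X : Type*} [NormedAddCommGroup X] [NormedSpace ℝ X] [CompleteSpace X]
    (T U : X → ℝ) (hT : Continuous T) (hU : Continuous U)
    (hTnonneg : ∀ u, 0 ≤ T u) (hT0 : T 0 = 0) (hU0 : U 0 = 0)
    (F : X → ℝ) (hF : ∀ u, F u = T u - U u)
    (i : ℝ → ℝ) (hi : ∀ l : ℝ, i l = sInf (T '' {u | U u = l}))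
    -- (i) i λ → 0 as λ → 0⁺
    (hi0 : Filter.Tendsto i (nhdsWithin 0 (Ioi 0)) (nhds 0))
    -- (ii) λ* > 0
    (ls : ℝ) (hls : ls = sInf {l : ℝ | 0 < l ∧ i l - l ≤ 0}) (hlspos : 0 < ls)
    -- (iii) λ** > 0
    (lss : ℝ) (hlss : lss = sInf {l : ℝ | 0 < l ∧ i l - l < 0}) (hlsspos : 0 < lss)
    -- (iv) minimizers exist at every positive level
    (hmin : ∀ l : ℝ, 0 < l → ∃ u, U u = l ∧ T u = i l)
    -- (v) continuous selection of minimizers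
    (γ : ℝ → X) (hγcont : ContinuousOn γ (Ici 0)) (hγ0 : γ 0 = 0)
    (hγ : ∀ l : ℝ, 0 < l → U (γ l) = l ∧ T (γ l) = i l)
    -- the mountain pass level
    (c : ℝ)
    (hc : c = sInf {m : ℝ | ∃ η : ℝ → X, ContinuousOn η (Icc 0 1) ∧ η 0 = 0 ∧
            F (η 1) < 0 ∧ m = sSup ((fun t => F (η t)) '' Icc 0 1)}) :
    0 < c ∧
      c = sSup ((fun l => sInf (F '' {u | U u = l})) '' Ioo 0 lss) ∧
      c = sSup ((fun l => F (γ l)) '' Ioo 0 lss) :=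
  maxmin_mountain_pass_general T U hT hU hTnonneg hU0 F hF i hi ls hls hlspos lss hlss hlsspos γ
    hγcont hγ0 hγ c hc
end

section
/- Let $X$ be a Banach space, $F = T - U$ with $T, U$ continuous, $T \geq 0$, $T(0)=U(0)=0$, $i_\lambda = \inf\{T(u): U(u)=\lambda\}$, and suppose there is a continuous $\gamma:[0,\infty)\to X$ with $\gamma(0)=0$, $U(\gamma(\lambda))=\lambda$ and $T(\gamma(\lambda))=i_\lambda$ for $\lambda>0$. Assume $\lambda^{**} := \inf\{\lambda>0 : i_\lambda - \lambda < 0\} \in (0,\infty)$ and that $i_\lambda \to 0$ as $\lambda \to 0^+$. Then there exists a sequence $\lambda_k > \lambda^{**}$ with $\lambda_k \to \lambda^{**}$, $F(\gamma(\lambda_k)) < 0$, and $F(\gamma(\lambda_k)) \to 0$, and moreover $c \leq \sup_{\lambda \in (0,\lambda^{**})} F(\gamma(\lambda))$, where $c$ is the mountain pass level. -/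
/-!
Along `γ` one has `F (γ λ) = i λ - λ`, so `λ**` is the infimum of the points where `F ∘ γ` is
negative. Continuity forces `F (γ λ**) = 0`, with `F ∘ γ ≥ 0` on `(0, λ**)` and negative values
accumulating at `λ**` from the right. For such a `λ` close enough to `λ**`, `F ∘ γ < ε` on
`[λ**, λ]`, and `t ↦ γ (λ t)` is an admissible mountain pass path, so
`c ≤ sup_{(0, λ**)} F ∘ γ + ε`.
-/

open Set Filter Topology

noncomputable def mountainPassLevel {X : Type*} [TopologicalSpace X] [Zero X] (F : X → ℝ) : ℝ :=
  sInf {m : ℝ | ∃ η : ℝ → X, ContinuousOn η (Icc 0 1) ∧ η 0 = 0 ∧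
    F (η 1) < 0 ∧ m = sSup ((fun t => F (η t)) '' Icc 0 1)}

section MountainPass

variable {X : Type*} [TopologicalSpace X] [Zero X] {F : X → ℝ}

theorem mountainPassLevel_le_sSup_of_path (hF : Continuous F) {η : ℝ → X}
    (hη : ContinuousOn η (Icc 0 1)) (hη0 : η 0 = 0) (hη1 : F (η 1) < 0) :
    mountainPassLevel F ≤ sSup ((fun t => F (η t)) '' Icc 0 1) := by
  refine csInf_le ⟨F 0, ?_⟩ ⟨η, hη, hη0, hη1, rfl⟩
  rintro m ⟨ζ, hζ, hζ0, -, rfl⟩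
  have hbdd : BddAbove ((fun t => F (ζ t)) '' Icc 0 1) :=
    (isCompact_Icc.image_of_continuousOn (hF.comp_continuousOn hζ)).bddAbove
  exact le_csSup hbdd ⟨0, left_mem_Icc.2 zero_le_one, by simp only [hζ0]⟩

theorem mountainPassLevel_le_sSup_of_path_Icc (hF : Continuous F) {l : ℝ} (hl : 0 ≤ l)
    {γ : ℝ → X} (hγ : ContinuousOn γ (Icc 0 l)) (hγ0 : γ 0 = 0) (hγl : F (γ l) < 0) :
    mountainPassLevel F ≤ sSup ((fun s => F (γ s)) '' Icc 0 l) := by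
  have hscale : (l * ·) '' Icc (0 : ℝ) 1 = Icc 0 l := by
    rw [image_mul_left_Icc hl zero_le_one, mul_zero, mul_one]
  have hη : ContinuousOn (fun t => γ (l * t)) (Icc 0 1) :=
    hγ.comp (continuous_const_mul l).continuousOn (mapsTo_iff_image_subset.2 hscale.subset)
  have := mountainPassLevel_le_sSup_of_path hF hη (by simpa using hγ0) (by simpa using hγl)
  rwa [← image_image (fun s => F (γ s)), hscale] at this

end MountainPass

section FirstNegative

variable {f : ℝ → ℝ} {a : ℝ}

theorem nonneg_of_lt_isGLB (ha : IsGLB {l | 0 < l ∧ f l < 0} a) {l : ℝ} (hl0 : 0 < l)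
    (hla : l < a) : 0 ≤ f l :=
  not_lt.1 fun hfl => hla.not_ge (ha.1 ⟨hl0, hfl⟩)

theorem apply_isGLB_eq_zero (ha : IsGLB {l | 0 < l ∧ f l < 0} a) (ha0 : 0 < a)
    (hne : {l | 0 < l ∧ f l < 0}.Nonempty) (hf : ContinuousAt f a) : f a = 0 := by
  have hle : f a ≤ 0 :=
    ContinuousWithinAt.closure_le (ha.mem_closure hne) hf.continuousWithinAt
      continuousWithinAt_const fun l hl => hl.2.le
  have ha_mem : a ∈ closure (Ioo 0 a) := by
    rw [closure_Ioo ha0.ne]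
    exact right_mem_Icc.2 ha0.le
  have hge : 0 ≤ f a :=
    ContinuousWithinAt.closure_le ha_mem continuousWithinAt_const hf.continuousWithinAt
      fun l hl => nonneg_of_lt_isGLB ha hl.1 hl.2
  exact le_antisymm hle hge

theorem isGLB_lt_of_mem (ha : IsGLB {l | 0 < l ∧ f l < 0} a) (ha0 : 0 < a)
    (hne : {l | 0 < l ∧ f l < 0}.Nonempty) (hf : ContinuousAt f a) {l : ℝ}
    (hl : l ∈ {l | 0 < l ∧ f l < 0}) : a < l := by
  refine (ha.1 hl).lt_of_ne fun hal => ?_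
  have := hl.2
  rw [← hal, apply_isGLB_eq_zero ha ha0 hne hf] at this
  exact this.false

theorem exists_seq_tendsto_isGLB_of_apply_neg (ha : IsGLB {l | 0 < l ∧ f l < 0} a)
    (ha0 : 0 < a) (hne : {l | 0 < l ∧ f l < 0}.Nonempty) (hf : ContinuousAt f a) :
    ∃ u : ℕ → ℝ, (∀ k, a < u k) ∧ Tendsto u atTop (𝓝 a) ∧ (∀ k, f (u k) < 0) ∧
      Tendsto (fun k => f (u k)) atTop (𝓝 0) := by
  obtain ⟨u, -, -, hu, huS⟩ := ha.exists_seq_antitone_tendsto hne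
  refine ⟨u, fun k => isGLB_lt_of_mem ha ha0 hne hf (huS k), hu, fun k => (huS k).2, ?_⟩
  exact apply_isGLB_eq_zero ha ha0 hne hf ▸ hf.tendsto.comp hu

theorem exists_mem_forall_Icc_apply_lt (ha : IsGLB {l | 0 < l ∧ f l < 0} a) (ha0 : 0 < a)
    (hne : {l | 0 < l ∧ f l < 0}.Nonempty) (hf : ContinuousAt f a) {ε : ℝ} (hε : 0 < ε) :
    ∃ l ∈ {l | 0 < l ∧ f l < 0}, ∀ s ∈ Icc a l, f s < ε := by
  have hnhds : {s | f s < ε} ∈ 𝓝[≥] a := by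
    refine nhdsWithin_le_nhds (hf.eventually (gt_mem_nhds ?_))
    rwa [apply_isGLB_eq_zero ha ha0 hne hf]
  obtain ⟨u, hau, hu⟩ := mem_nhdsGE_iff_exists_Ico_subset.1 hnhds
  obtain ⟨l, hl, -, hlu⟩ := ha.exists_between hau
  exact ⟨l, hl, fun s hs => hu ⟨hs.1, hs.2.trans_lt hlu⟩⟩

theorem exists_mem_sSup_image_Icc_le_add (hf : ContinuousOn f (Ici 0)) (hf0 : f 0 = 0)
    (ha : IsGLB {l | 0 < l ∧ f l < 0} a) (ha0 : 0 < a) (hne : {l | 0 < l ∧ f l < 0}.Nonempty)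
    {ε : ℝ} (hε : 0 < ε) :
    ∃ l ∈ {l | 0 < l ∧ f l < 0}, sSup (f '' Icc 0 l) ≤ sSup (f '' Ioo 0 a) + ε := by
  have hfa : ContinuousAt f a := hf.continuousAt (Ici_mem_nhds ha0)
  have hbdd : BddAbove (f '' Ioo 0 a) :=
    ((isCompact_Icc.image_of_continuousOn (hf.mono Icc_subset_Ici_self)).bddAbove).mono
      (image_mono Ioo_subset_Icc_self)
  have hM : 0 ≤ sSup (f '' Ioo 0 a) :=
    (nonneg_of_lt_isGLB ha (half_pos ha0) (half_lt_self ha0)).trans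
      (le_csSup hbdd (mem_image_of_mem f ⟨half_pos ha0, half_lt_self ha0⟩))
  obtain ⟨l, hl, hlε⟩ := exists_mem_forall_Icc_apply_lt ha ha0 hne hfa hε
  refine ⟨l, hl, csSup_le ((nonempty_Icc.2 hl.1.le).image f) ?_⟩
  rintro _ ⟨s, ⟨hs0, hsl⟩, rfl⟩
  rcases hs0.eq_or_lt with rfl | hs0
  · linarith
  rcases lt_or_ge s a with hsa | has
  · linarith [le_csSup hbdd (mem_image_of_mem f ⟨hs0, hsa⟩)]
  · linarith [hlε s ⟨has, hsl⟩]

end FirstNegative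

theorem mountain_pass_upper_bound_general
    {X : Type*} [NormedAddCommGroup X]
    (T U : X → ℝ) (hT : Continuous T) (hU : Continuous U)
    (hT0 : T 0 = 0) (hU0 : U 0 = 0)
    (F : X → ℝ) (hF : ∀ u, F u = T u - U u)
    (i : ℝ → ℝ)
    (γ : ℝ → X) (hγcont : ContinuousOn γ (Ici 0)) (hγ0 : γ 0 = 0)
    (hγ : ∀ l : ℝ, 0 < l → U (γ l) = l ∧ T (γ l) = i l)
    (lss : ℝ) (hlss : lss = sInf {l : ℝ | 0 < l ∧ i l - l < 0})
    (hlsspos : 0 < lss) (hne : {l : ℝ | 0 < l ∧ i l - l < 0}.Nonempty)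
    (c : ℝ)
    (hc : c = sInf {m : ℝ | ∃ η : ℝ → X, ContinuousOn η (Icc 0 1) ∧ η 0 = 0 ∧
            F (η 1) < 0 ∧ m = sSup ((fun t => F (η t)) '' Icc 0 1)}) :
    (∃ lk : ℕ → ℝ, (∀ k, lss < lk k) ∧
      Filter.Tendsto lk Filter.atTop (nhds lss) ∧
      (∀ k, F (γ (lk k)) < 0) ∧
      Filter.Tendsto (fun k => F (γ (lk k))) Filter.atTop (nhds 0)) ∧
    c ≤ sSup ((fun l => F (γ l)) '' Ioo 0 lss) := by
  have hFc : Continuous F := (funext hF : F = _) ▸ hT.sub hU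
  set f : ℝ → ℝ := fun l => F (γ l)
  have hf : ContinuousOn f (Ici 0) := hFc.comp_continuousOn hγcont
  have hS : {l : ℝ | 0 < l ∧ i l - l < 0} = {l | 0 < l ∧ f l < 0} := by
    ext l
    exact and_congr_right fun hl => by rw [show f l = F (γ l) from rfl, hF, (hγ l hl).1, (hγ l hl).2]
  rw [hS] at hlss hne
  have ha : IsGLB {l | 0 < l ∧ f l < 0} lss := hlss ▸ isGLB_csInf hne ⟨0, fun l hl => hl.1.le⟩
  refine ⟨exists_seq_tendsto_isGLB_of_apply_neg ha hlsspos hne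
    (hf.continuousAt (Ici_mem_nhds hlsspos)), le_of_forall_pos_le_add fun ε hε => ?_⟩
  obtain ⟨l, hl, hle⟩ := exists_mem_sSup_image_Icc_le_add hf (by simp [f, hγ0, hF, hT0, hU0])
    ha hlsspos hne hε
  calc c = mountainPassLevel F := hc
    _ ≤ sSup (f '' Icc 0 l) := mountainPassLevel_le_sSup_of_path_Icc hFc hl.1.le
        (hγcont.mono Icc_subset_Ici_self) hγ0 hl.2
    _ ≤ _ := hle

/-- Upper-bound half of the max-min theorem: there is a sequence `λ_k > λ**` with
`λ_k → λ**`, `F (γ λ_k) < 0` and `F (γ λ_k) → 0`, and the mountain pass level `c`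
is at most the supremum of `F` along `γ` on `(0, λ**)`. -/
theorem mountain_pass_upper_bound
    {X : Type*} [NormedAddCommGroup X] [NormedSpace ℝ X] [CompleteSpace X]
    (T U : X → ℝ) (hT : Continuous T) (hU : Continuous U)
    (hTnonneg : ∀ u, 0 ≤ T u) (hT0 : T 0 = 0) (hU0 : U 0 = 0)
    (F : X → ℝ) (hF : ∀ u, F u = T u - U u)
    (i : ℝ → ℝ) (hi : ∀ l : ℝ, i l = sInf (T '' {u | U u = l}))
    (γ : ℝ → X) (hγcont : ContinuousOn γ (Ici 0)) (hγ0 : γ 0 = 0)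
    (hγ : ∀ l : ℝ, 0 < l → U (γ l) = l ∧ T (γ l) = i l)
    (lss : ℝ) (hlss : lss = sInf {l : ℝ | 0 < l ∧ i l - l < 0})
    (hlsspos : 0 < lss) (hne : {l : ℝ | 0 < l ∧ i l - l < 0}.Nonempty)
    (hi0 : Filter.Tendsto i (nhdsWithin 0 (Ioi 0)) (nhds 0))
    (c : ℝ)
    (hc : c = sInf {m : ℝ | ∃ η : ℝ → X, ContinuousOn η (Icc 0 1) ∧ η 0 = 0 ∧
            F (η 1) < 0 ∧ m = sSup ((fun t => F (η t)) '' Icc 0 1)}) :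
    (∃ lk : ℕ → ℝ, (∀ k, lss < lk k) ∧
      Filter.Tendsto lk Filter.atTop (nhds lss) ∧
      (∀ k, F (γ (lk k)) < 0) ∧
      Filter.Tendsto (fun k => F (γ (lk k))) Filter.atTop (nhds 0)) ∧
    c ≤ sSup ((fun l => F (γ l)) '' Ioo 0 lss) :=
  mountain_pass_upper_bound_general T U hT hU hT0 hU0 F hF i γ hγcont hγ0 hγ lss hlss hlsspos hne c
    hc
end
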